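/- Let B(w) denote the number of permutations σ ∈ S_{n+k} with no n-descent satisfying the order constraints of the word w ∈ {r,c}^{k}. Then for any word w of length k-1, B(cw) + B(rw) = (n+1)·B(w), where cw and rw denote prepending c, respectively r, to w. -/
import Mathlib


open Finset Polynomial

/-- A permutation `σ` of `{0, ..., n+k-1}` satisfies the order constraints of the
word `w ∈ {r,c}^k` (where `true` encodes the letter `c` and `false` encodes `r`):
for each `i < k`, the position of value `i` is before the position of value `n+i`
when `w i = c`, and after it when `w i = r`. -/
def StripConstraints (n k : ℕ) (w : Fin k → Bool) (σ : Equiv.Perm (Fin (n + k))) : Prop :=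
  ∀ i : Fin k,
    (w i = true →
      (σ.symm ⟨i.val, by have := i.isLt; omega⟩).val
        < (σ.symm ⟨n + i.val, by have := i.isLt; omega⟩).val) ∧
    (w i = false →
      (σ.symm ⟨n + i.val, by have := i.isLt; omega⟩).val
        < (σ.symm ⟨i.val, by have := i.isLt; omega⟩).val)

instance {n k : ℕ} (w : Fin k → Bool) (σ : Equiv.Perm (Fin (n + k))) :
    Decidable (StripConstraints n k w σ) :=
  inferInstanceAs (Decidable (∀ _ : Fin k, _ ∧ _))

/-- `σ` has no `n`-descent: `σ(j) - σ(j+1) ≤ n` for all consecutive positions. -/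
def NoNDescent (n : ℕ) {m : ℕ} (σ : Equiv.Perm (Fin m)) : Prop :=
  ∀ j j' : Fin m, j'.val = j.val + 1 → (σ j).val ≤ n + (σ j').val

instance {n m : ℕ} (σ : Equiv.Perm (Fin m)) : Decidable (NoNDescent n σ) :=
  inferInstanceAs (Decidable (∀ _ _ : Fin m, _ → _))

/-! ### Auxiliary definitions and lemmas -/

section Ins

variable {m : ℕ}

/-- Insert the value `0` at position `p`, all other values shifted up by one,
keeping their relative order as prescribed by `τ`. -/
def ins (p : Fin (m + 1)) (τ : Equiv.Perm (Fin m)) : Equiv.Perm (Fin (m + 1)) :=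
  (finSuccEquiv' p).trans ((τ.optionCongr).trans (finSuccEquiv' 0).symm)

lemma ins_apply_self (p : Fin (m + 1)) (τ : Equiv.Perm (Fin m)) : ins p τ p = 0 := by
  simp [ins]

lemma ins_apply_succAbove (p : Fin (m + 1)) (τ : Equiv.Perm (Fin m)) (j : Fin m) :
    ins p τ (p.succAbove j) = (τ j).succ := by
  simp [ins, finSuccEquiv'_succAbove, finSuccEquiv'_symm_some, Fin.zero_succAbove]

lemma ins_symm_zero (p : Fin (m + 1)) (τ : Equiv.Perm (Fin m)) : (ins p τ).symm 0 = p := by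
  rw [← ins_apply_self p τ, Equiv.symm_apply_apply]

lemma ins_symm_succ (p : Fin (m + 1)) (τ : Equiv.Perm (Fin m)) (j : Fin m) :
    (ins p τ).symm j.succ = p.succAbove (τ.symm j) := by
  rw [Equiv.symm_apply_eq, ins_apply_succAbove, Equiv.apply_symm_apply]

lemma ins_apply_of_lt (p : Fin (m + 1)) (τ : Equiv.Perm (Fin m)) (x : Fin (m + 1))
    (h : x.val < p.val) :
    (ins p τ x).val = (τ ⟨x.val, by have := p.isLt; omega⟩).val + 1 := by
  have hx : p.succAbove ⟨x.val, by have := p.isLt; omega⟩ = x := by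
    rw [Fin.succAbove_of_castSucc_lt]
    · rfl
    · exact h
  conv_lhs => rw [← hx]
  rw [ins_apply_succAbove]
  rfl

lemma ins_apply_of_gt (p : Fin (m + 1)) (τ : Equiv.Perm (Fin m)) (x : Fin (m + 1))
    (h : p.val < x.val) :
    (ins p τ x).val = (τ ⟨x.val - 1, by have := x.isLt; omega⟩).val + 1 := by
  have hx : p.succAbove ⟨x.val - 1, by have := x.isLt; omega⟩ = x := by
    rw [Fin.succAbove_of_le_castSucc]
    · exact Fin.ext (by simp [Fin.succ]; omega)
    · simp [Fin.le_def, Fin.castSucc, Fin.castAdd, Fin.castLE]; omega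
  conv_lhs => rw [← hx]
  rw [ins_apply_succAbove]
  rfl

lemma ins_apply_of_lt' (p : Fin (m + 1)) (τ : Equiv.Perm (Fin m)) (v : ℕ)
    (hv : v < p.val) (h2 : v < m + 1) :
    (ins p τ ⟨v, h2⟩).val = (τ ⟨v, by have := p.isLt; omega⟩).val + 1 :=
  ins_apply_of_lt p τ ⟨v, h2⟩ hv

lemma ins_apply_of_gt' (p : Fin (m + 1)) (τ : Equiv.Perm (Fin m)) (u : ℕ)
    (hu : p.val ≤ u) (h2 : u + 1 < m + 1) :
    (ins p τ ⟨u + 1, h2⟩).val = (τ ⟨u, by omega⟩).val + 1 :=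
  ins_apply_of_gt p τ ⟨u + 1, h2⟩ (Nat.lt_succ_of_le hu)

lemma ins_apply_self' (p : Fin (m + 1)) (τ : Equiv.Perm (Fin m)) (v : ℕ)
    (hv : v = p.val) (h2 : v < m + 1) :
    (ins p τ ⟨v, h2⟩).val = 0 := by
  have h3 : (⟨v, h2⟩ : Fin (m + 1)) = p := Fin.ext hv
  rw [h3, ins_apply_self]
  rfl

attribute [irreducible] ins

/-- The decomposition of a permutation of `Fin (m+1)` as the position of the value `0`
together with the relative order of the remaining values. -/
def insEquiv (m : ℕ) : Fin (m + 1) × Equiv.Perm (Fin m) ≃ Equiv.Perm (Fin (m + 1)) where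
  toFun pt := ins pt.1 pt.2
  invFun σ := (σ.symm 0,
    Equiv.removeNone ((finSuccEquiv' (σ.symm 0)).symm.trans (σ.trans (finSuccEquiv' 0))))
  left_inv := by
    rintro ⟨p, τ⟩
    have h0 : (ins p τ).symm 0 = p := ins_symm_zero p τ
    simp only [h0]
    have h1 : (finSuccEquiv' p).symm.trans ((ins p τ).trans (finSuccEquiv' 0))
        = τ.optionCongr := by
      refine Equiv.ext fun x => ?_
      rcases x with _ | a
      · simp [Equiv.trans_apply, finSuccEquiv'_symm_none, ins_apply_self, finSuccEquiv'_at]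
      · simp only [Equiv.trans_apply, finSuccEquiv'_symm_some, ins_apply_succAbove,
          Equiv.optionCongr_apply, Option.map_some]
        rw [← Fin.zero_succAbove, finSuccEquiv'_succAbove]
    rw [h1, Equiv.removeNone_optionCongr]
  right_inv := by
    intro σ
    set p := σ.symm 0 with hp
    set g := (finSuccEquiv' p).symm.trans (σ.trans (finSuccEquiv' 0)) with hg
    have hnone : g none = none := by
      simp [hg, hp, Equiv.apply_symm_apply, finSuccEquiv'_at]
    have hoc : (Equiv.removeNone g).optionCongr = g := by
      refine Equiv.ext fun x => ?_
      cases x with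
      | none => simp [hnone]
      | some a =>
        rcases h : g (some a) with _ | b
        · exact absurd (g.injective (h.trans hnone.symm)) (by simp)
        · have h3 := Equiv.removeNone_some g ⟨b, h⟩
          rw [Equiv.optionCongr_apply, Option.map_some]
          exact h3.trans h
    show ins p (Equiv.removeNone g) = σ
    have : ins p (Equiv.removeNone g)
        = (finSuccEquiv' p).trans (((Equiv.removeNone g).optionCongr).trans
            (finSuccEquiv' 0).symm) := by
      with_unfolding_all rfl
    rw [this, hoc]
    refine Equiv.ext fun x => ?_
    simp [hg]

@[simp] lemma insEquiv_apply (m : ℕ) (pt : Fin (m + 1) × Equiv.Perm (Fin m)) :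
    insEquiv m pt = ins pt.1 pt.2 := rfl

/-- `p` is a valid insertion position for the value `0`: either at the front,
or immediately after a value that is at most `n`. -/
def ValidPos (n : ℕ) {m : ℕ} (p : Fin (m + 1)) (τ : Equiv.Perm (Fin m)) : Prop :=
  p.val = 0 ∨ ∃ q : Fin m, p.val = q.val + 1 ∧ (τ q).val < n

lemma noNDescent_ins_iff {n : ℕ} (p : Fin (m + 1)) (τ : Equiv.Perm (Fin m)) :
    NoNDescent n (ins p τ) ↔ NoNDescent n τ ∧ ValidPos n p τ := by
  have hplt := p.isLt
  constructor
  · intro H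
    constructor
    · intro q q' hq
      have hqlt := q.isLt; have hq'lt := q'.isLt
      have e2 : q' = (⟨q.val + 1, by omega⟩ : Fin m) := Fin.ext hq
      rw [e2]
      rcases lt_trichotomy p.val (q.val + 1) with hc | hc | hc
      · have h1 := H ⟨q.val + 1, by omega⟩ ⟨q.val + 1 + 1, by omega⟩ rfl
        have hA := ins_apply_of_gt' p τ q.val (by omega) (by omega)
        have hB := ins_apply_of_gt' p τ (q.val + 1) (by omega) (by omega)
        simp only [Fin.eta] at hA
        omega
      · have h1 := H ⟨q.val, by omega⟩ ⟨q.val + 1, by omega⟩ rfl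
        have hA := ins_apply_of_lt' p τ q.val (by omega) (by omega)
        have hB := ins_apply_self' p τ (q.val + 1) hc.symm (by omega)
        simp only [Fin.eta] at hA
        omega
      · have h1 := H ⟨q.val, by omega⟩ ⟨q.val + 1, by omega⟩ rfl
        have hA := ins_apply_of_lt' p τ q.val (by omega) (by omega)
        have hB := ins_apply_of_lt' p τ (q.val + 1) (by omega) (by omega)
        simp only [Fin.eta] at hA
        omega
    · rcases Nat.eq_zero_or_pos p.val with hp0 | hp0
      · exact Or.inl hp0
      · refine Or.inr ⟨⟨p.val - 1, by omega⟩, show p.val = p.val - 1 + 1 by omega, ?_⟩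
        have h1 := H ⟨p.val - 1, by omega⟩ ⟨p.val, by omega⟩
          ((Nat.succ_pred_eq_of_pos hp0).symm)
        have hA := ins_apply_of_lt' p τ (p.val - 1) (by omega) (by omega)
        have hB := ins_apply_self' p τ p.val rfl (by omega)
        omega
  · rintro ⟨hτ, hv⟩ j j' hj
    have hjlt := j.isLt; have hj'lt := j'.isLt
    have e2 : j' = (⟨j.val + 1, by omega⟩ : Fin (m + 1)) := Fin.ext hj
    rw [e2]
    rcases lt_trichotomy (j.val + 1) p.val with hd | hd | hd
    · have h1 := hτ ⟨j.val, by omega⟩ ⟨j.val + 1, by omega⟩ rfl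
      have hA := ins_apply_of_lt p τ j (by omega)
      have hB := ins_apply_of_lt' p τ (j.val + 1) hd (by omega)
      omega
    · rcases hv with h0 | ⟨q, hq1, hq2⟩
      · exfalso; omega
      · have e3 : q = (⟨j.val, by omega⟩ : Fin m) := Fin.ext (show q.val = j.val by omega)
        rw [e3] at hq2
        have hA := ins_apply_of_lt p τ j (by omega)
        have hB := ins_apply_self' p τ (j.val + 1) hd (by omega)
        omega
    · rcases Nat.eq_or_lt_of_le (by omega : p.val ≤ j.val) with he | he
      · have hA : (ins p τ j).val = 0 := by
          have e3 : j = p := Fin.ext he.symm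
          rw [e3, ins_apply_self]
          rfl
        omega
      · have h1 := hτ ⟨j.val - 1, by omega⟩ ⟨j.val, by omega⟩
          (show j.val = j.val - 1 + 1 by omega)
        have hA := ins_apply_of_gt p τ j he
        have hB := ins_apply_of_gt' p τ j.val (by omega) (by omega)
        omega

end Ins

section Constraints

variable {n k : ℕ}

/-- The "tail" constraints on a permutation of `Fin (n+k+1)`: the constraints of
`Fin.cons b w`, forgetting the one coming from the first letter. -/
def TailOK (n k : ℕ) (w : Fin k → Bool) (σ : Equiv.Perm (Fin (n + k + 1))) : Prop :=
  ∀ j : Fin k,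
    (w j = true →
      (σ.symm ⟨j.val + 1, by have := j.isLt; omega⟩).val
        < (σ.symm ⟨n + (j.val + 1), by have := j.isLt; omega⟩).val) ∧
    (w j = false →
      (σ.symm ⟨n + (j.val + 1), by have := j.isLt; omega⟩).val
        < (σ.symm ⟨j.val + 1, by have := j.isLt; omega⟩).val)

lemma strip_cons_iff (b : Bool) (w : Fin k → Bool) (σ : Equiv.Perm (Fin (n + (k + 1)))) :
    StripConstraints n (k + 1) (Fin.cons b w) σ ↔
      ((b = true → (σ.symm ⟨0, by omega⟩).val < (σ.symm ⟨n, by omega⟩).val) ∧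
        (b = false → (σ.symm ⟨n, by omega⟩).val < (σ.symm ⟨0, by omega⟩).val)) ∧
      TailOK n k w σ := by
  constructor
  · intro h
    exact ⟨h ⟨0, Nat.succ_pos k⟩, fun j => h j.succ⟩
  · rintro ⟨h0, ht⟩ i
    refine Fin.cases ?_ ?_ i
    · exact h0
    · exact fun j => ht j

lemma tailOK_ins_iff (w : Fin k → Bool) (p : Fin (n + k + 1)) (τ : Equiv.Perm (Fin (n + k))) :
    TailOK n k w (ins p τ) ↔ StripConstraints n k w τ := by
  refine forall_congr' fun j => ?_
  have hjlt := j.isLt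
  have hA : ((ins p τ).symm ⟨j.val + 1, by omega⟩)
      = p.succAbove (τ.symm ⟨j.val, by omega⟩) :=
    ins_symm_succ p τ ⟨j.val, by omega⟩
  have hB : ((ins p τ).symm ⟨n + (j.val + 1), by omega⟩)
      = p.succAbove (τ.symm ⟨n + j.val, by omega⟩) :=
    ins_symm_succ p τ ⟨n + j.val, by omega⟩
  rw [hA, hB]
  have key : ∀ (a b : Fin (n + k)),
      ((p.succAbove a).val < (p.succAbove b).val ↔ a.val < b.val) := fun a b => by
    rw [← Fin.lt_def, Fin.succAbove_lt_succAbove_iff, Fin.lt_def]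
  simp only [key]

end Constraints

section Counting

variable {n k : ℕ}

/-- The insertion position encoded as an element of `Fin (n+1)`:
`0` for the front position, and `v+1` for the position right after the value `v < n`. -/
def valOf (p : Fin (n + k + 1)) (τ : Equiv.Perm (Fin (n + k))) : Fin (n + 1) :=
  if _ : p.val = 0 then ⟨0, by omega⟩
  else ⟨min n ((τ ⟨p.val - 1, by have := p.isLt; omega⟩).val + 1), by omega⟩

def posOf (d : Fin (n + 1)) (τ : Equiv.Perm (Fin (n + k))) : Fin (n + k + 1) :=
  if _ : d.val = 0 then ⟨0, by omega⟩
  else ⟨(τ.symm ⟨d.val - 1, by have := d.isLt; omega⟩).val + 1,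
    by have := (τ.symm ⟨d.val - 1, by have := d.isLt; omega⟩).isLt; omega⟩

lemma validPos_posOf (d : Fin (n + 1)) (τ : Equiv.Perm (Fin (n + k))) :
    ValidPos n (posOf d τ) τ := by
  by_cases h : d.val = 0
  · left
    simp [posOf, h]
  · right
    refine ⟨τ.symm ⟨d.val - 1, by have := d.isLt; omega⟩, by simp [posOf, h], ?_⟩
    have h2 := Equiv.apply_symm_apply τ ⟨d.val - 1, by have := d.isLt; omega⟩
    rw [h2]
    show d.val - 1 < n
    have := d.isLt
    omega


lemma posOf_valOf (p : Fin (n + k + 1)) (τ : Equiv.Perm (Fin (n + k)))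
    (hv : ValidPos n p τ) : posOf (valOf p τ) τ = p := by
  rcases hv with h0 | ⟨q, hq1, hq2⟩
  · apply Fin.ext
    have e1 : valOf p τ = (⟨0, Nat.succ_pos _⟩ : Fin (n + 1)) := by
      unfold valOf; rw [dif_pos h0]
    rw [e1]
    unfold posOf
    rw [dif_pos rfl]
    exact h0.symm
  · apply Fin.ext
    have e1 : (valOf p τ).val = (τ q).val + 1 := by
      unfold valOf
      rw [dif_neg (by omega)]
      show min n ((τ ⟨p.val - 1, _⟩).val + 1) = _
      rw [show (⟨p.val - 1, by have := p.isLt; omega⟩ : Fin (n + k)) = q from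
        Fin.ext (show p.val - 1 = q.val by omega)]
      omega
    have e2 : valOf p τ = (⟨(τ q).val + 1, by omega⟩ : Fin (n + 1)) := Fin.ext e1
    rw [e2]
    unfold posOf
    rw [dif_neg (Nat.succ_ne_zero _)]
    show (τ.symm ⟨(τ q).val, _⟩).val + 1 = p.val
    simp only [Fin.eta, Equiv.symm_apply_apply]
    omega

lemma valOf_posOf (d : Fin (n + 1)) (τ : Equiv.Perm (Fin (n + k))) :
    valOf (posOf d τ) τ = d := by
  by_cases h : d.val = 0
  · apply Fin.ext
    have e1 : posOf d τ = (⟨0, Nat.succ_pos _⟩ : Fin (n + k + 1)) := by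
      unfold posOf; rw [dif_pos h]
    rw [e1]
    unfold valOf
    rw [dif_pos rfl]
    exact h.symm
  · have hd := d.isLt
    set s := τ.symm ⟨d.val - 1, by omega⟩ with hs
    have hslt := s.isLt
    have e1 : posOf d τ = (⟨s.val + 1, by omega⟩ : Fin (n + k + 1)) := by
      unfold posOf; rw [dif_neg h]
    rw [e1]
    apply Fin.ext
    unfold valOf
    rw [dif_neg (Nat.succ_ne_zero _)]
    show min n ((τ ⟨s.val, _⟩).val + 1) = d.val
    simp only [Fin.eta, hs, Equiv.apply_symm_apply]
    show min n (d.val - 1 + 1) = d.val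
    omega

/-- Splitting off the insertion position as an element of `Fin (n+1)`. -/
def countEquiv (n k : ℕ) (w : Fin k → Bool) :
    {pt : Fin (n + k + 1) × Equiv.Perm (Fin (n + k)) //
        StripConstraints n k w pt.2 ∧ NoNDescent n pt.2 ∧ ValidPos n pt.1 pt.2}
      ≃ Fin (n + 1) ×
        {τ : Equiv.Perm (Fin (n + k)) // StripConstraints n k w τ ∧ NoNDescent n τ} where
  toFun x := (valOf x.1.1 x.1.2, ⟨x.1.2, x.2.1, x.2.2.1⟩)
  invFun y := ⟨(posOf y.1 y.2.1, y.2.1), y.2.2.1, y.2.2.2, validPos_posOf y.1 y.2.1⟩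
  left_inv x := by
    apply Subtype.ext
    apply Prod.ext
    · exact posOf_valOf x.1.1 x.1.2 x.2.2.2
    · rfl
  right_inv y := by
    apply Prod.ext
    · exact valOf_posOf y.1 y.2.1
    · rfl

end Counting

section Final

variable {n k : ℕ}

/-- The position of the value `0` is before the position of the value `n`. -/
def HeadLt (n k : ℕ) (σ : Equiv.Perm (Fin (n + k + 1))) : Prop :=
  (σ.symm ⟨0, by omega⟩).val < (σ.symm ⟨n, by omega⟩).val

lemma head_ne (hn : 1 ≤ n) (σ : Equiv.Perm (Fin (n + (k + 1)))) :
    (σ.symm ⟨0, by omega⟩).val ≠ (σ.symm ⟨n, by omega⟩).val := by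
  intro h
  have h2 := σ.symm.injective (Fin.ext h)
  have h3 : (0 : ℕ) = n := congrArg Fin.val h2
  omega

theorem stmt5 (n k : ℕ) (hn : 1 ≤ n) (w : Fin k → Bool) :
    Nat.card {σ : Equiv.Perm (Fin (n + (k + 1))) //
        StripConstraints n (k + 1) (Fin.cons true w) σ ∧ NoNDescent n σ}
      + Nat.card {σ : Equiv.Perm (Fin (n + (k + 1))) //
        StripConstraints n (k + 1) (Fin.cons false w) σ ∧ NoNDescent n σ}
      = (n + 1) *
        Nat.card {σ : Equiv.Perm (Fin (n + k)) //
          StripConstraints n k w σ ∧ NoNDescent n σ} := by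
  classical
  -- the permutations satisfying the tail constraints and having no n-descent
  have e₁ : {σ : Equiv.Perm (Fin (n + (k + 1))) //
      StripConstraints n (k + 1) (Fin.cons true w) σ ∧ NoNDescent n σ}
      ≃ {x : {σ : Equiv.Perm (Fin (n + (k + 1))) // TailOK n k w σ ∧ NoNDescent n σ} //
          HeadLt n k x.val} := by
    refine (Equiv.subtypeEquivRight fun σ => ?_).trans
      (Equiv.subtypeSubtypeEquivSubtypeInter _ _).symm
    rw [strip_cons_iff]
    constructor
    · rintro ⟨⟨hh, ht⟩, hd⟩
      exact ⟨⟨ht, hd⟩, hh.1 rfl⟩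
    · rintro ⟨⟨ht, hd⟩, hh⟩
      exact ⟨⟨⟨fun _ => hh, fun hc => absurd hc (by decide)⟩, ht⟩, hd⟩
  have e₂ : {σ : Equiv.Perm (Fin (n + (k + 1))) //
      StripConstraints n (k + 1) (Fin.cons false w) σ ∧ NoNDescent n σ}
      ≃ {x : {σ : Equiv.Perm (Fin (n + (k + 1))) // TailOK n k w σ ∧ NoNDescent n σ} //
          ¬ HeadLt n k x.val} := by
    refine (Equiv.subtypeEquivRight fun σ => ?_).trans
      (Equiv.subtypeSubtypeEquivSubtypeInter _ (fun σ => ¬ HeadLt n k σ)).symm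
    rw [strip_cons_iff]
    constructor
    · rintro ⟨⟨hh, ht⟩, hd⟩
      refine ⟨⟨ht, hd⟩, fun hlt => ?_⟩
      have h2 := hh.2 rfl
      unfold HeadLt at hlt
      omega
    · rintro ⟨⟨ht, hd⟩, hh⟩
      have hne := head_ne hn σ
      unfold HeadLt at hh
      exact ⟨⟨⟨fun hc => absurd hc (by decide), fun _ => by omega⟩, ht⟩, hd⟩
  have e₃ : {pt : Fin (n + k + 1) × Equiv.Perm (Fin (n + k)) //
      StripConstraints n k w pt.2 ∧ NoNDescent n pt.2 ∧ ValidPos n pt.1 pt.2}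
      ≃ {σ : Equiv.Perm (Fin (n + (k + 1))) // TailOK n k w σ ∧ NoNDescent n σ} := by
    refine Equiv.subtypeEquiv (insEquiv (n + k)) fun pt => ?_
    obtain ⟨p, τ⟩ := pt
    show _ ↔ TailOK n k w (ins p τ) ∧ NoNDescent n (ins p τ)
    rw [tailOK_ins_iff, noNDescent_ins_iff]
  calc Nat.card {σ : Equiv.Perm (Fin (n + (k + 1))) //
        StripConstraints n (k + 1) (Fin.cons true w) σ ∧ NoNDescent n σ}
      + Nat.card {σ : Equiv.Perm (Fin (n + (k + 1))) //
        StripConstraints n (k + 1) (Fin.cons false w) σ ∧ NoNDescent n σ}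
      = Nat.card {x : {σ : Equiv.Perm (Fin (n + (k + 1))) //
            TailOK n k w σ ∧ NoNDescent n σ} // HeadLt n k x.val}
        + Nat.card {x : {σ : Equiv.Perm (Fin (n + (k + 1))) //
            TailOK n k w σ ∧ NoNDescent n σ} // ¬ HeadLt n k x.val} := by
        rw [Nat.card_congr e₁, Nat.card_congr e₂]
    _ = Nat.card {σ : Equiv.Perm (Fin (n + (k + 1))) // TailOK n k w σ ∧ NoNDescent n σ} := by
        rw [← Nat.card_sum]
        exact Nat.card_congr (Equiv.sumCompl _)
    _ = Nat.card {pt : Fin (n + k + 1) × Equiv.Perm (Fin (n + k)) //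
          StripConstraints n k w pt.2 ∧ NoNDescent n pt.2 ∧ ValidPos n pt.1 pt.2} :=
        (Nat.card_congr e₃).symm
    _ = Nat.card (Fin (n + 1) ×
          {τ : Equiv.Perm (Fin (n + k)) // StripConstraints n k w τ ∧ NoNDescent n τ}) :=
        Nat.card_congr (countEquiv n k w)
    _ = (n + 1) * Nat.card {σ : Equiv.Perm (Fin (n + k)) //
          StripConstraints n k w σ ∧ NoNDescent n σ} := by
        rw [Nat.card_prod, Nat.card_eq_fintype_card, Fintype.card_fin]

end Final
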